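/- Let m, J > 0, d > 0, ψ ∈ ℝ, and define the post-collisional map on ℝ⁶ (with coordinates V = (v, v̄, ω, ω̄), v, v̄ ∈ ℝ², ω, ω̄ ∈ ℝ) by: letting u = (m d (v − v̄) − 2J(ω + ω̄) e(ψ)^⊥)·e(ψ)^⊥ and K = m d² + 4J, set v' = v̄ + (d/K) u e(ψ)^⊥, v̄' = v − (d/K) u e(ψ)^⊥, ω' = −ω − (2/K) u, ω̄' = −ω̄ − (2/K) u. Then this map conserves linear momentum (m v' + m v̄' = m v + m v̄) and kinetic energy (m|v'|² + J ω'² + m|v̄'|² + J ω̄'² = m|v|² + J ω² + m|v̄|² + J ω̄²). -/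

import Mathlib

open Matrix Real

/-!
The collision moves `v` and `v̄` by opposite multiples of the unit vector `e = e(ψ)^⊥`, so
momentum is conserved. Expanding the energies, the cross terms contribute `-(2u/K) u`, because
`u` is exactly `md (v - v̄)·e - 2J(ω + ω̄)`, while the quadratic terms contribute
`(2u²/K²)(md² + 4J) = 2u²/K`; the two cancel.
-/

section Scattering

variable {R : Type*} [Field R] {n : Type*} [Fintype n]

theorem dotProduct_add_smul_self (x e : n → R) (a : R) :
    (x + a • e) ⬝ᵥ (x + a • e) = x ⬝ᵥ x + 2 * a * (x ⬝ᵥ e) + a ^ 2 * (e ⬝ᵥ e) := by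
  simp only [dotProduct_add, add_dotProduct, dotProduct_smul, smul_dotProduct, smul_eq_mul,
    dotProduct_comm e x]
  ring

theorem dotProduct_sub_smul_self (x e : n → R) (a : R) :
    (x - a • e) ⬝ᵥ (x - a • e) = x ⬝ᵥ x - 2 * a * (x ⬝ᵥ e) + a ^ 2 * (e ⬝ᵥ e) := by
  rw [sub_eq_add_neg, ← neg_smul, dotProduct_add_smul_self]
  ring

theorem scatter_energy_eq (m J d ω ωbar u K : R) (v vbar e : n → R) (he : e ⬝ᵥ e = 1)
    (hu : u = ((m * d) • (v - vbar) - (2 * J * (ω + ωbar)) • e) ⬝ᵥ e)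
    (hK : K = m * d ^ 2 + 4 * J) :
    m * ((vbar + (d / K * u) • e) ⬝ᵥ (vbar + (d / K * u) • e)) + J * (-ω - 2 / K * u) ^ 2 +
        m * ((v - (d / K * u) • e) ⬝ᵥ (v - (d / K * u) • e)) + J * (-ωbar - 2 / K * u) ^ 2 =
      m * (v ⬝ᵥ v) + J * ω ^ 2 + m * (vbar ⬝ᵥ vbar) + J * ωbar ^ 2 := by
  have hu' : u = m * d * (v ⬝ᵥ e - vbar ⬝ᵥ e) - 2 * J * (ω + ωbar) := by
    simp only [hu, sub_dotProduct, smul_dotProduct, smul_eq_mul, he]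
    ring
  -- `K⁻¹ K K⁻¹ = K⁻¹` holds also for `K = 0`, where `K⁻¹ = 0`.
  have hKinv : K⁻¹ * K * K⁻¹ = K⁻¹ := by
    simpa only [inv_inv] using mul_inv_mul_cancel K⁻¹
  rw [dotProduct_add_smul_self, dotProduct_sub_smul_self, he]
  subst hK
  linear_combination (2 * u / (m * d ^ 2 + 4 * J)) * hu' + 2 * u ^ 2 * hKinv

end Scattering

theorem dotProduct_self_perp_eq_one (ψ : ℝ) :
    ![-Real.sin ψ, Real.cos ψ] ⬝ᵥ ![-Real.sin ψ, Real.cos ψ] = 1 := by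
  simp only [dotProduct, Fin.sum_univ_two, Matrix.cons_val_zero, Matrix.cons_val_one]
  linear_combination sin_sq_add_cos_sq ψ

theorem stmt15_general (m J d ψ : ℝ)
    (v vbar : Fin 2 → ℝ) (ω ωbar : ℝ)
    (eperp : Fin 2 → ℝ) (heperp : eperp = ![-Real.sin ψ, Real.cos ψ])
    (u K : ℝ)
    (hu : u = ((m * d) • (v - vbar) - (2 * J * (ω + ωbar)) • eperp) ⬝ᵥ eperp)
    (hK : K = m * d ^ 2 + 4 * J)
    (v' vbar' : Fin 2 → ℝ) (ω' ωbar' : ℝ)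
    (hv' : v' = vbar + (d / K * u) • eperp)
    (hvbar' : vbar' = v - (d / K * u) • eperp)
    (hω' : ω' = -ω - 2 / K * u)
    (hωbar' : ωbar' = -ωbar - 2 / K * u) :
    m • v' + m • vbar' = m • v + m • vbar ∧
    m * (v' ⬝ᵥ v') + J * ω' ^ 2 + m * (vbar' ⬝ᵥ vbar') + J * ωbar' ^ 2 =
      m * (v ⬝ᵥ v) + J * ω ^ 2 + m * (vbar ⬝ᵥ vbar) + J * ωbar ^ 2 := by
  subst hv' hvbar' hω' hωbar'
  have he : eperp ⬝ᵥ eperp = 1 := heperp ▸ dotProduct_self_perp_eq_one ψ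
  exact ⟨by module, scatter_energy_eq m J d ω ωbar u K v vbar eperp he hu hK⟩

/-- The 'second' scattering map, given componentwise (with
`e(ψ)^⊥ = (−sin ψ, cos ψ)`, `u = (md(v − v̄) − 2J(ω + ω̄)e(ψ)^⊥)·e(ψ)^⊥`,
`K = md² + 4J`) by `v' = v̄ + (d/K)u e(ψ)^⊥`, `v̄' = v − (d/K)u e(ψ)^⊥`,
`ω' = −ω − (2/K)u`, `ω̄' = −ω̄ − (2/K)u`, conserves linear momentum and kinetic
energy. -/
theorem stmt15 (m J d ψ : ℝ) (hm : 0 < m) (hJ : 0 < J) (hd : 0 < d)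
    (v vbar : Fin 2 → ℝ) (ω ωbar : ℝ)
    (eperp : Fin 2 → ℝ) (heperp : eperp = ![-Real.sin ψ, Real.cos ψ])
    (u K : ℝ)
    (hu : u = ((m * d) • (v - vbar) - (2 * J * (ω + ωbar)) • eperp) ⬝ᵥ eperp)
    (hK : K = m * d ^ 2 + 4 * J)
    (v' vbar' : Fin 2 → ℝ) (ω' ωbar' : ℝ)
    (hv' : v' = vbar + (d / K * u) • eperp)
    (hvbar' : vbar' = v - (d / K * u) • eperp)
    (hω' : ω' = -ω - 2 / K * u)
    (hωbar' : ωbar' = -ωbar - 2 / K * u) :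
    m • v' + m • vbar' = m • v + m • vbar ∧
    m * (v' ⬝ᵥ v') + J * ω' ^ 2 + m * (vbar' ⬝ᵥ vbar') + J * ωbar' ^ 2 =
      m * (v ⬝ᵥ v) + J * ω ^ 2 + m * (vbar ⬝ᵥ vbar) + J * ωbar ^ 2 :=
  stmt15_general m J d ψ v vbar ω ωbar eperp heperp u K hu hK v' vbar' ω' ωbar' hv' hvbar' hω'
    hωbar'
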